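/- arXiv:1304.0490 — 2 statements merged into one kernel-verified Lean document; each statement's English description precedes it below -/
import Mathlib

section
/- Let σ be a distortion, τ_σ(p) := ∫₀^p σ(u) du, and τ_σ⁻¹(u) := inf{p ∈ [0,1] : τ_σ(p) ≥ u}. Let L be a real random variable and U a uniformly distributed random variable on the same probability space with L = F_L⁻¹(U) almost surely, and set L_σ := F_L⁻¹(τ_σ⁻¹(U)). Then τ_σ(u) ≤ u for all u ∈ [0,1], L_σ ≥ L almost surely, and P(L_σ ≤ y) ≤ F_L(y) for every y ∈ ℝ; that is, L_σ stochastically dominates L in first order. -/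
open MeasureTheory Set Filter ProbabilityTheory
open scoped ENNReal

/-! Since `σ` is nondecreasing, its mean over `[0, u]` is at most its mean over `[u, 1]`, so
`τ_σ(u) ≤ u`; hence `τ_σ⁻¹(u) ≥ u`, and monotonicity of the quantile function gives
`L_σ = F_L⁻¹(τ_σ⁻¹(U)) ≥ F_L⁻¹(U) = L` almost surely, whence `P(L_σ ≤ y) ≤ P(L ≤ y)`.

The quantile function is only monotone on `(0, 1)`: at `0` and `1` its defining set may be
unbounded below or empty, and `sInf` takes the junk value `0`. So we also need `τ_σ⁻¹(u) < 1`
for `u < 1`, which follows from `σ(1) ≥ 1`, and the event `U = 1` is treated separately. -/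

/-- The cumulative distribution function `F_L(x) = P(L ≤ x)` of a random variable `L`. -/
noncomputable def cdfRV {Ω : Type*} [MeasurableSpace Ω] (P : Measure Ω) (L : Ω → ℝ) (x : ℝ) : ℝ :=
  (P {ω | L ω ≤ x}).toReal

/-- The generalized inverse (quantile function) `F_L⁻¹(u) = inf {x : F_L(x) ≥ u}`. -/
noncomputable def quantileRV {Ω : Type*} [MeasurableSpace Ω] (P : Measure Ω) (L : Ω → ℝ)
    (u : ℝ) : ℝ :=
  sInf {x : ℝ | u ≤ cdfRV P L x}

/-- `τ_σ(p) = ∫₀^p σ(u) du`, the antiderivative of the distortion `σ`. -/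
noncomputable def tauSigma (σ : ℝ → ℝ) (p : ℝ) : ℝ := ∫ u in (0:ℝ)..p, σ u

/-- The generalized inverse `τ_σ⁻¹(u) = inf {p ∈ [0,1] : τ_σ(p) ≥ u}`. -/
noncomputable def tauSigmaInv (σ : ℝ → ℝ) (u : ℝ) : ℝ :=
  sInf {p : ℝ | p ∈ Icc (0:ℝ) 1 ∧ u ≤ tauSigma σ p}

/-- `U` is uniformly distributed: `P(U ≤ u) = u` for all `u ∈ [0,1]`. -/
def IsUniformRV {Ω : Type*} [MeasurableSpace Ω] (P : Measure Ω) (U : Ω → ℝ) : Prop :=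
  ∀ u ∈ Icc (0:ℝ) 1, (P {ω | U ω ≤ u}).toReal = u

lemma MonotoneOn.intervalIntegrable_of_le_of_le {σ : ℝ → ℝ} {a b c d : ℝ}
    (hσ : MonotoneOn σ (Icc a d)) (hab : a ≤ b) (hbc : b ≤ c) (hcd : c ≤ d) :
    IntervalIntegrable σ volume b c :=
  (hσ.mono (by rw [uIcc_of_le hbc]; exact Icc_subset_Icc hab hcd)).intervalIntegrable

section Distortion

variable {σ : ℝ → ℝ}

lemma tauSigma_add_integral_eq_one (hσ_mono : MonotoneOn σ (Icc (0:ℝ) 1))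
    (hσ_int : ∫ u in (0:ℝ)..1, σ u = 1) {p : ℝ} (hp : p ∈ Icc (0:ℝ) 1) :
    tauSigma σ p + ∫ t in p..1, σ t = 1 := by
  rw [tauSigma, intervalIntegral.integral_add_adjacent_intervals
    (hσ_mono.intervalIntegrable_of_le_of_le le_rfl hp.1 hp.2)
    (hσ_mono.intervalIntegrable_of_le_of_le hp.1 hp.2 le_rfl), hσ_int]

lemma tauSigma_le_mul_sigma (hσ_mono : MonotoneOn σ (Icc (0:ℝ) 1)) {p : ℝ} (hp : p ∈ Icc (0:ℝ) 1) :
    tauSigma σ p ≤ p * σ p := by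
  simpa [tauSigma] using intervalIntegral.integral_mono_on hp.1
    (hσ_mono.intervalIntegrable_of_le_of_le le_rfl hp.1 hp.2) intervalIntegrable_const
    fun t ht => hσ_mono ⟨ht.1, ht.2.trans hp.2⟩ hp ht.2

lemma mul_sigma_le_integral_to_one (hσ_mono : MonotoneOn σ (Icc (0:ℝ) 1)) {p : ℝ}
    (hp : p ∈ Icc (0:ℝ) 1) : (1 - p) * σ p ≤ ∫ t in p..1, σ t := by
  simpa using intervalIntegral.integral_mono_on hp.2 intervalIntegrable_const
    (hσ_mono.intervalIntegrable_of_le_of_le hp.1 hp.2 le_rfl)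
    fun t ht => hσ_mono hp ⟨hp.1.trans ht.1, ht.2⟩ ht.1

lemma integral_to_one_le_mul_sigma_one (hσ_mono : MonotoneOn σ (Icc (0:ℝ) 1)) {p : ℝ}
    (hp : p ∈ Icc (0:ℝ) 1) : ∫ t in p..1, σ t ≤ (1 - p) * σ 1 := by
  simpa using intervalIntegral.integral_mono_on hp.2
    (hσ_mono.intervalIntegrable_of_le_of_le hp.1 hp.2 le_rfl) intervalIntegrable_const
    fun t ht => hσ_mono ⟨hp.1.trans ht.1, ht.2⟩ (right_mem_Icc.2 zero_le_one) ht.2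

lemma tauSigma_le_self (hσ_mono : MonotoneOn σ (Icc (0:ℝ) 1))
    (hσ_int : ∫ u in (0:ℝ)..1, σ u = 1) : ∀ u ∈ Icc (0:ℝ) 1, tauSigma σ u ≤ u := by
  intro u hu
  have h₁ := tauSigma_le_mul_sigma hσ_mono hu
  have h₂ := mul_sigma_le_integral_to_one hσ_mono hu
  have h₃ := tauSigma_add_integral_eq_one hσ_mono hσ_int hu
  -- `τ(u) ≤ u σ(u)` and `1 - τ(u) ≥ (1 - u) σ(u)`; eliminate `σ(u)`.
  nlinarith [hu.1, hu.2]

lemma one_le_sigma_one (hσ_mono : MonotoneOn σ (Icc (0:ℝ) 1))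
    (hσ_int : ∫ u in (0:ℝ)..1, σ u = 1) : 1 ≤ σ 1 := by
  simpa [hσ_int] using integral_to_one_le_mul_sigma_one hσ_mono (left_mem_Icc.2 zero_le_one)

lemma le_tauSigmaInv (hσ_mono : MonotoneOn σ (Icc (0:ℝ) 1))
    (hσ_int : ∫ u in (0:ℝ)..1, σ u = 1) {u : ℝ} (hu : u ≤ 1) : u ≤ tauSigmaInv σ u :=
  le_csInf ⟨1, right_mem_Icc.2 zero_le_one, by rwa [tauSigma, hσ_int]⟩
    fun p hp => hp.2.trans (tauSigma_le_self hσ_mono hσ_int p hp.1)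

lemma tauSigmaInv_le_of_mem {u p : ℝ} (hp : p ∈ Icc (0:ℝ) 1) (hu : u ≤ tauSigma σ p) :
    tauSigmaInv σ u ≤ p :=
  csInf_le ⟨0, fun _ hq => hq.1.1⟩ ⟨hp, hu⟩

lemma tauSigmaInv_one (hσ_mono : MonotoneOn σ (Icc (0:ℝ) 1))
    (hσ_int : ∫ u in (0:ℝ)..1, σ u = 1) : tauSigmaInv σ 1 = 1 :=
  le_antisymm (tauSigmaInv_le_of_mem (right_mem_Icc.2 zero_le_one) (by rw [tauSigma, hσ_int]))
    (le_tauSigmaInv hσ_mono hσ_int le_rfl)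

lemma tauSigmaInv_lt_one (hσ_mono : MonotoneOn σ (Icc (0:ℝ) 1))
    (hσ_int : ∫ u in (0:ℝ)..1, σ u = 1) {u : ℝ} (hu : u ∈ Ico (0:ℝ) 1) :
    tauSigmaInv σ u < 1 := by
  have hσ₁ := one_le_sigma_one hσ_mono hσ_int
  -- On `[p, 1]` the mass of `σ` is at most `(1 - p) σ(1) = 1 - u`, so `τ(p) ≥ u`.
  set p := 1 - (1 - u) / σ 1 with hp_def
  have hp : p ∈ Icc (0:ℝ) 1 := by
    constructor
    · rw [sub_nonneg, div_le_one (by linarith)]; linarith [hu.1]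
    · rw [sub_le_self_iff]; exact div_nonneg (by linarith [hu.2]) (by linarith)
  have hp₁ : p < 1 := sub_lt_self 1 (div_pos (by linarith [hu.2]) (by linarith))
  have hmass : (1 - p) * σ 1 = 1 - u := by rw [hp_def]; field_simp; ring
  have hτp : u ≤ tauSigma σ p := by
    linarith [integral_to_one_le_mul_sigma_one hσ_mono hp, tauSigma_add_integral_eq_one hσ_mono hσ_int hp]
  exact (tauSigmaInv_le_of_mem hp hτp).trans_lt hp₁

end Distortion

section Quantile

variable {Ω : Type*} [MeasurableSpace Ω] {P : Measure Ω} [IsProbabilityMeasure P] {L : Ω → ℝ}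

lemma cdfRV_eq_cdf_map (hL : Measurable L) : cdfRV P L = cdf (P.map L) := by
  have := Measure.isProbabilityMeasure_map (μ := P) hL.aemeasurable
  ext x
  rw [cdf_eq_real, measureReal_def, Measure.map_apply hL measurableSet_Iic]
  rfl

lemma quantileRV_mono (hL : Measurable L) {u v : ℝ} (hu : 0 < u) (huv : u ≤ v) (hv : v < 1) :
    quantileRV P L u ≤ quantileRV P L v := by
  have := Measure.isProbabilityMeasure_map (μ := P) hL.aemeasurable
  rw [quantileRV, quantileRV, cdfRV_eq_cdf_map hL]
  obtain ⟨a, ha⟩ :=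
    ((tendsto_cdf_atBot (P.map L)).eventually (eventually_lt_nhds hu)).exists_forall_of_atBot
  obtain ⟨b, hb⟩ := ((tendsto_cdf_atTop (P.map L)).eventually (eventually_gt_nhds hv)).exists
  refine csInf_le_csInf ⟨a, fun x hx => ?_⟩ ⟨b, hb.le⟩ fun x hx => huv.trans hx
  by_contra! hxa
  exact (ha x hxa.le).not_ge hx

end Quantile

lemma quantileRV_le_quantileRV_tauSigmaInv {Ω : Type*} [MeasurableSpace Ω] {P : Measure Ω}
    [IsProbabilityMeasure P] {L : Ω → ℝ} (hL : Measurable L) {σ : ℝ → ℝ}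
    (hσ_mono : MonotoneOn σ (Icc (0:ℝ) 1)) (hσ_int : ∫ u in (0:ℝ)..1, σ u = 1) {u : ℝ}
    (hu : u ∈ Ioc (0:ℝ) 1) : quantileRV P L u ≤ quantileRV P L (tauSigmaInv σ u) := by
  rcases hu.2.eq_or_lt with rfl | hu₁
  · rw [tauSigmaInv_one hσ_mono hσ_int]
  · exact quantileRV_mono hL hu.1 (le_tauSigmaInv hσ_mono hσ_int hu₁.le)
      (tauSigmaInv_lt_one hσ_mono hσ_int ⟨hu.1.le, hu₁⟩)

namespace IsUniformRV

variable {Ω : Type*} [MeasurableSpace Ω] {P : Measure Ω} {U : Ω → ℝ}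

lemma ae_pos [IsFiniteMeasure P] (hU : IsUniformRV P U) : ∀ᵐ ω ∂P, 0 < U ω := by
  have h₀ := hU 0 (left_mem_Icc.2 zero_le_one)
  rw [ENNReal.toReal_eq_zero_iff] at h₀
  simpa [ae_iff] using h₀.resolve_right (measure_ne_top P _)

lemma ae_le_one [IsProbabilityMeasure P] (hU : IsUniformRV P U) (hU_meas : Measurable U) :
    ∀ᵐ ω ∂P, U ω ≤ 1 := by
  have h₁ := hU 1 (right_mem_Icc.2 zero_le_one)
  rw [ENNReal.toReal_eq_one_iff] at h₁
  rw [ae_iff_measure_eq (measurableSet_le hU_meas measurable_const).nullMeasurableSet,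
    measure_univ]
  exact h₁

end IsUniformRV

theorem statement_2_general {Ω : Type*} [MeasurableSpace Ω] (P : Measure Ω) [IsProbabilityMeasure P]
    (L : Ω → ℝ) (hL : Measurable L)
    (σ : ℝ → ℝ)
    (hσ_mono : MonotoneOn σ (Icc (0:ℝ) 1))
    (hσ_int : ∫ u in (0:ℝ)..1, σ u = 1)
    (U : Ω → ℝ) (hU : Measurable U) (hUunif : IsUniformRV P U)
    (hcoup : ∀ᵐ ω ∂P, L ω = quantileRV P L (U ω))
    (Lσ : Ω → ℝ) (hLσ : Lσ = fun ω => quantileRV P L (tauSigmaInv σ (U ω))) :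
    (∀ u ∈ Icc (0:ℝ) 1, tauSigma σ u ≤ u) ∧
      (∀ᵐ ω ∂P, L ω ≤ Lσ ω) ∧
      (∀ y : ℝ, (P {ω | Lσ ω ≤ y}).toReal ≤ cdfRV P L y) := by
  have hle : ∀ᵐ ω ∂P, L ω ≤ Lσ ω := by
    filter_upwards [hcoup, hUunif.ae_pos, hUunif.ae_le_one hU] with ω hω h₀ h₁
    rw [hω, hLσ]
    exact quantileRV_le_quantileRV_tauSigmaInv hL hσ_mono hσ_int ⟨h₀, h₁⟩
  refine ⟨tauSigma_le_self hσ_mono hσ_int, hle, fun y => ?_⟩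
  refine ENNReal.toReal_mono (measure_ne_top P _) (measure_mono_ae ?_)
  filter_upwards [hle] with ω hω hy using hω.trans hy

/-- if `L = F_L⁻¹(U)` a.s. and `L_σ = F_L⁻¹(τ_σ⁻¹(U))`, then `τ_σ(u) ≤ u` on
`[0,1]`, `L_σ ≥ L` almost surely, and `F_{L_σ}(y) ≤ F_L(y)` for every `y`; in other words,
`L_σ` stochastically dominates `L` in first order. -/
theorem statement_2 {Ω : Type*} [MeasurableSpace Ω] (P : Measure Ω) [IsProbabilityMeasure P]
    (L : Ω → ℝ) (hL : Measurable L)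
    (σ : ℝ → ℝ)
    (hσ_nonneg : ∀ u ∈ Icc (0:ℝ) 1, 0 ≤ σ u)
    (hσ_mono : MonotoneOn σ (Icc (0:ℝ) 1))
    (hσ_int : ∫ u in (0:ℝ)..1, σ u = 1)
    (U : Ω → ℝ) (hU : Measurable U) (hUunif : IsUniformRV P U)
    (hcoup : ∀ᵐ ω ∂P, L ω = quantileRV P L (U ω))
    (Lσ : Ω → ℝ) (hLσ : Lσ = fun ω => quantileRV P L (tauSigmaInv σ (U ω))) :
    (∀ u ∈ Icc (0:ℝ) 1, tauSigma σ u ≤ u) ∧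
      (∀ᵐ ω ∂P, L ω ≤ Lσ ω) ∧
      (∀ y : ℝ, (P {ω | Lσ ω ≤ y}).toReal ≤ cdfRV P L y) :=
  statement_2_general P L hL σ hσ_mono hσ_int U hU hUunif hcoup Lσ hLσ
end

section
/- Let μ be a Borel probability measure on [0,1] with μ({1}) = 0 and ∫_{[0,1)} (1−p)⁻¹ μ(dp) < ∞, and let σ_μ(α) := ∫_{[0,α]} (1−p)⁻¹ μ(dp). Then for every essentially bounded real random variable L, π_{σ_μ}(L) = ∫_{[0,1]} CTE_α(L) μ(dα), and moreover ∫_α¹ σ_μ(p) dp = ∫_{[0,1]} min{(1−α)/(1−p), 1} μ(dp) for all α ∈ [0,1]. -/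
open MeasureTheory Set
open scoped ENNReal

/-- The σ-distorted premium `π_σ(L) = ∫₀¹ F_L⁻¹(u) σ(u) du`. -/
noncomputable def distortedPremium {Ω : Type*} [MeasurableSpace Ω] (P : Measure Ω)
    (L : Ω → ℝ) (σ : ℝ → ℝ) : ℝ :=
  ∫ u in (0:ℝ)..1, quantileRV P L u * σ u

/-- The conditional tail expectation `CTE_α(L) = (1−α)⁻¹ ∫_α¹ F_L⁻¹(p) dp`. -/
noncomputable def CTE {Ω : Type*} [MeasurableSpace Ω] (P : Measure Ω) (L : Ω → ℝ)
    (α : ℝ) : ℝ :=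
  (1 - α)⁻¹ * ∫ p in α..1, quantileRV P L p

/-- `σ_μ(α) = ∫_{[0,α]} (1−p)⁻¹ μ(dp)`. -/
noncomputable def sigmaMu (μ : Measure ℝ) (α : ℝ) : ℝ :=
  ∫ p in Icc (0:ℝ) α, (1 - p)⁻¹ ∂μ

/-!
As `μ` lives on `[0, 1)`, `σ_μ(u) = ∫_{q ≤ u} (1 - q)⁻¹ μ(dq)`. Both identities are then Fubini
for `g(u) (1 - q)⁻¹ 𝟙{q ≤ u}` on `(a, 1] × ℝ`: integrating out `u` first leaves
`∫_{(max a q, 1]} g` against `(1 - q)⁻¹ μ(dq)`. For `a = 0` and `g = F_L⁻¹` this is `CTE_q(L)`;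
for `a = α` and `g = 1` it is `(1 - max α q) / (1 - q) = min ((1 - α) / (1 - q)) 1`.
Fubini applies because the quantile function of a bounded `L` is monotone and bounded on `(0, 1]`.
-/

section Quantile

variable {Ω : Type*} [MeasurableSpace Ω] {P : Measure Ω} {L : Ω → ℝ} {a b u x : ℝ}

lemma cdfRV_eq_one_of_ae_le [IsProbabilityMeasure P] (hb : ∀ᵐ ω ∂P, L ω ≤ b) :
    cdfRV P L b = 1 := by
  rw [cdfRV, measure_congr (ae_eq_univ.mpr (mem_ae_iff.mp hb)), measure_univ, ENNReal.toReal_one]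

lemma cdfRV_eq_zero_of_lt_of_ae_le (ha : ∀ᵐ ω ∂P, a ≤ L ω) (hx : x < a) : cdfRV P L x = 0 := by
  have hnull : P {ω | L ω ≤ x} = 0 :=
    measure_mono_null (fun ω hω => not_le.mpr (lt_of_le_of_lt hω hx)) (ae_iff.mp ha)
  rw [cdfRV, hnull, ENNReal.toReal_zero]

lemma mem_lowerBounds_setOf_le_cdfRV (ha : ∀ᵐ ω ∂P, a ≤ L ω) (hu : 0 < u) :
    a ∈ lowerBounds {x | u ≤ cdfRV P L x} := fun x hx => by
  by_contra! hxa
  have hux : u ≤ cdfRV P L x := hx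
  rw [cdfRV_eq_zero_of_lt_of_ae_le ha hxa] at hux
  linarith

lemma mem_setOf_le_cdfRV_of_ae_le [IsProbabilityMeasure P] (hb : ∀ᵐ ω ∂P, L ω ≤ b) (hu : u ≤ 1) :
    b ∈ {x | u ≤ cdfRV P L x} := by
  rwa [← cdfRV_eq_one_of_ae_le hb] at hu

variable [IsProbabilityMeasure P]

lemma quantileRV_mem_Icc (ha : ∀ᵐ ω ∂P, a ≤ L ω) (hb : ∀ᵐ ω ∂P, L ω ≤ b) (hu : u ∈ Ioc 0 1) :
    quantileRV P L u ∈ Icc a b :=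
  ⟨le_csInf ⟨b, mem_setOf_le_cdfRV_of_ae_le hb hu.2⟩ (mem_lowerBounds_setOf_le_cdfRV ha hu.1),
    csInf_le ⟨a, mem_lowerBounds_setOf_le_cdfRV ha hu.1⟩ (mem_setOf_le_cdfRV_of_ae_le hb hu.2)⟩

lemma monotoneOn_quantileRV (ha : ∀ᵐ ω ∂P, a ≤ L ω) (hb : ∀ᵐ ω ∂P, L ω ≤ b) :
    MonotoneOn (quantileRV P L) (Ioc 0 1) :=
  fun _ hu _ hv huv => csInf_le_csInf ⟨a, mem_lowerBounds_setOf_le_cdfRV ha hu.1⟩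
    ⟨b, mem_setOf_le_cdfRV_of_ae_le hb hv.2⟩ fun _ hx => huv.trans hx

lemma integrableOn_quantileRV_Ioc (ha : ∀ᵐ ω ∂P, a ≤ L ω) (hb : ∀ᵐ ω ∂P, L ω ≤ b) :
    IntegrableOn (quantileRV P L) (Ioc 0 1) :=
  Integrable.of_bound
    (aemeasurable_restrict_of_monotoneOn measurableSet_Ioc
      (monotoneOn_quantileRV ha hb)).aestronglyMeasurable
    (max |a| |b|)
    ((ae_restrict_mem measurableSet_Ioc).mono fun _ hu =>
      abs_le_max_abs_abs (quantileRV_mem_Icc ha hb hu).1 (quantileRV_mem_Icc ha hb hu).2)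

end Quantile

lemma integral_mul_setIntegral_Iic_comm {ν μ : Measure ℝ} [SFinite ν] [SFinite μ]
    {g w : ℝ → ℝ} (hg : Integrable g ν) (hw : Integrable w μ) :
    ∫ u, g u * (∫ q in Iic u, w q ∂μ) ∂ν = ∫ q, (∫ u in Ici q, g u ∂ν) * w q ∂μ := by
  have hF : Integrable (Function.uncurry fun u q => (Iic u).indicator (fun q => g u * w q) q)
      (ν.prod μ) := by
    have hF_eq : (Function.uncurry fun u q => (Iic u).indicator (fun q => g u * w q) q) =
        {z : ℝ × ℝ | z.2 ≤ z.1}.indicator fun z => g z.1 * w z.2 := by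
      funext ⟨u, q⟩
      simp [indicator_apply]
    rw [hF_eq]
    exact (hg.mul_prod hw).indicator (measurableSet_le measurable_snd measurable_fst)
  calc ∫ u, g u * (∫ q in Iic u, w q ∂μ) ∂ν
      = ∫ u, ∫ q, (Iic u).indicator (fun q => g u * w q) q ∂μ ∂ν := by
        simp_rw [integral_indicator measurableSet_Iic, integral_const_mul]
    _ = ∫ q, ∫ u, (Iic u).indicator (fun q => g u * w q) q ∂ν ∂μ := integral_integral_swap hF
    _ = ∫ q, (∫ u in Ici q, g u ∂ν) * w q ∂μ := by
        congr with q
        rw [← integral_mul_const, ← integral_indicator measurableSet_Ici]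
        rfl

lemma restrict_Ioc_restrict_Ici (a b q : ℝ) :
    (volume.restrict (Ioc a b)).restrict (Ici q) = volume.restrict (Ioc (max a q) b) := by
  rw [Measure.restrict_restrict measurableSet_Ici, inter_comm, ← Ioc_inter_Ioi]
  exact Measure.restrict_congr_set ((ae_eq_refl _).inter Ioi_ae_eq_Ici.symm)

lemma one_sub_max_div_one_sub {α q : ℝ} (hq : q < 1) :
    (1 - max α q) / (1 - q) = min ((1 - α) / (1 - q)) 1 := by
  have h : 0 < 1 - q := sub_pos.mpr hq
  rw [← min_sub_sub_left, ← min_div_div_right h.le, div_self h.ne']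

lemma ae_mem_Ico_of_measure_compl_Icc_eq_zero {μ : Measure ℝ} {a b : ℝ}
    (hab : μ (Icc a b)ᶜ = 0) (hb : μ {b} = 0) : ∀ᵐ p ∂μ, p ∈ Ico a b := by
  rw [← Icc_sdiff_right, sdiff_eq]
  exact Filter.inter_mem (mem_ae_iff.mpr hab) (compl_mem_ae_iff.mpr hb)

lemma sigmaMu_eq_setIntegral_Iic {μ : Measure ℝ} (hμ : ∀ᵐ p ∂μ, 0 ≤ p) (x : ℝ) :
    sigmaMu μ x = ∫ p in Iic x, (1 - p)⁻¹ ∂μ :=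
  setIntegral_congr_set (Filter.eventuallyEq_set.mpr (hμ.mono fun p hp => by simp [hp]))

theorem statement_7_general {Ω : Type*} [MeasurableSpace Ω] (P : Measure Ω) [IsProbabilityMeasure P]
    (L : Ω → ℝ) (hLbdd : MemLp L ⊤ P)
    (μ : Measure ℝ) [IsProbabilityMeasure μ]
    (hsupp : μ (Icc (0:ℝ) 1)ᶜ = 0)
    (h1 : μ {(1:ℝ)} = 0)
    (hint : IntegrableOn (fun p : ℝ => (1 - p)⁻¹) (Ico (0:ℝ) 1) μ) :
    distortedPremium P L (sigmaMu μ) = (∫ α, CTE P L α ∂μ) ∧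
      ∀ α ∈ Icc (0:ℝ) 1,
        (∫ p in α..1, sigmaMu μ p) = ∫ p, min ((1 - α) / (1 - p)) 1 ∂μ := by
  have hμ := ae_mem_Ico_of_measure_compl_Icc_eq_zero hsupp h1
  have hw : Integrable (fun p : ℝ => (1 - p)⁻¹) μ := by
    rwa [IntegrableOn, Measure.restrict_eq_self_of_ae_mem hμ] at hint
  have hσ : sigmaMu μ = fun x => ∫ p in Iic x, (1 - p)⁻¹ ∂μ :=
    funext (sigmaMu_eq_setIntegral_Iic (hμ.mono fun _ hp => hp.1))
  have hbound := ae_le_lpNorm_exponent_top hLbdd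
  have hg : IntegrableOn (quantileRV P L) (Ioc 0 1) :=
    integrableOn_quantileRV_Ioc (hbound.mono fun _ h => neg_le_of_abs_le h)
      (hbound.mono fun _ h => le_of_abs_le h)
  refine ⟨?_, fun α hα => ?_⟩
  · calc distortedPremium P L (sigmaMu μ)
        = ∫ u in Ioc 0 1, quantileRV P L u * ∫ q in Iic u, (1 - q)⁻¹ ∂μ := by
          rw [distortedPremium, intervalIntegral.integral_of_le zero_le_one, hσ]
      _ = ∫ q, (∫ u in Ici q, quantileRV P L u ∂volume.restrict (Ioc 0 1)) * (1 - q)⁻¹ ∂μ :=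
          integral_mul_setIntegral_Iic_comm hg hw
      _ = ∫ α, CTE P L α ∂μ := integral_congr_ae <| hμ.mono fun q hq => by
          dsimp only
          rw [restrict_Ioc_restrict_Ici, max_eq_right hq.1, CTE,
            intervalIntegral.integral_of_le hq.2.le, mul_comm]
  · calc ∫ p in α..1, sigmaMu μ p
        = ∫ p in Ioc α 1, 1 * ∫ q in Iic p, (1 - q)⁻¹ ∂μ := by
          simp only [intervalIntegral.integral_of_le hα.2, hσ, one_mul]
      _ = ∫ q, (∫ _ in Ici q, (1 : ℝ) ∂volume.restrict (Ioc α 1)) * (1 - q)⁻¹ ∂μ :=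
          integral_mul_setIntegral_Iic_comm (integrable_const 1) hw
      _ = ∫ q, min ((1 - α) / (1 - q)) 1 ∂μ := integral_congr_ae <| hμ.mono fun q hq => by
          dsimp only
          rw [restrict_Ioc_restrict_Ici, setIntegral_const, smul_eq_mul, mul_one,
            Real.volume_real_Ioc_of_le (max_le hα.2 hq.2.le), ← div_eq_mul_inv,
            one_sub_max_div_one_sub hq.2]

/-- for a Borel probability measure `μ` on `[0,1]` with `μ({1}) = 0` and
`∫_{[0,1)} (1−p)⁻¹ μ(dp) < ∞`, and every essentially bounded real random variable `L`,
`π_{σ_μ}(L) = ∫ CTE_α(L) μ(dα)`, and moreover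
`∫_α¹ σ_μ(p) dp = ∫ min{(1−α)/(1−p), 1} μ(dp)` for all `α ∈ [0,1]`. -/
theorem statement_7 {Ω : Type*} [MeasurableSpace Ω] (P : Measure Ω) [IsProbabilityMeasure P]
    (L : Ω → ℝ) (hL : Measurable L) (hLbdd : MemLp L ⊤ P)
    (μ : Measure ℝ) [IsProbabilityMeasure μ]
    (hsupp : μ (Icc (0:ℝ) 1)ᶜ = 0)
    (h1 : μ {(1:ℝ)} = 0)
    (hint : IntegrableOn (fun p : ℝ => (1 - p)⁻¹) (Ico (0:ℝ) 1) μ) :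
    distortedPremium P L (sigmaMu μ) = (∫ α, CTE P L α ∂μ) ∧
      ∀ α ∈ Icc (0:ℝ) 1,
        (∫ p in α..1, sigmaMu μ p) = ∫ p, min ((1 - α) / (1 - p)) 1 ∂μ :=
  statement_7_general P L hLbdd μ hsupp h1 hint
end
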